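/- Consider binary classification of the Gaussian mixture in ℝ^d where class +1 ∼ N(γμ, σ²I) and class −1 ∼ N(−γμ, I) with μ = (η,...,η), η > 0, γ > 0, σ > 1. Among linear classifiers f(x) = sign(wᵀx + b) with ‖w‖₂ = 1, any classifier minimizing the standard error R(f|+1) + R(f|−1) must have w = (1/√d, ..., 1/√d). -/

import Mathlib

/-!
The error depends on `w` only through `s = ∑ i, w i`, and is strictly decreasing in `s` because
`γ η > 0` and the normal CDF is strictly increasing. On the unit sphere Cauchy–Schwarz gives
`s ≤ √d`, with equality exactly at the uniform vector `(1/√d, …, 1/√d)`. A minimizer therefore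
has `s = √d`, since otherwise the uniform vector (with the same bias) has strictly smaller error.
-/

open Real Set

/-- Standard normal cumulative distribution function. -/
noncomputable def stdNormalCDF (z : ℝ) : ℝ :=
  ∫ t in Set.Iic z, (Real.sqrt (2 * Real.pi))⁻¹ * Real.exp (-t ^ 2 / 2)

/-- Total standard error (sum of the two class-conditional errors) of the linear
classifier `x ↦ sign(wᵀx + b)` on the Gaussian mixture where class +1 has
distribution `N(γμ, σ²I)` and class −1 has distribution `N(−γμ, I)`,
with `μ = (η,…,η)`.  The projection `wᵀx` is Gaussian with mean `±γη∑ᵢwᵢ`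
and variance `σ²` (resp. `1`), which yields the closed form below. -/
noncomputable def mixtureStdError (d : ℕ) (γ η σ : ℝ) (w : Fin d → ℝ) (b : ℝ) : ℝ :=
  stdNormalCDF ((-b - γ * η * (∑ i, w i)) / σ) + stdNormalCDF (b - γ * η * (∑ i, w i))

lemma integrable_stdNormalDensity : MeasureTheory.Integrable
    (fun t : ℝ => (Real.sqrt (2 * Real.pi))⁻¹ * Real.exp (-t ^ 2 / 2)) := by
  convert (integrable_exp_neg_mul_sq (by norm_num : (0:ℝ) < 1 / 2)).const_mul
    (Real.sqrt (2 * Real.pi))⁻¹ using 2 with t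
  ring_nf

lemma stdNormalCDF_strictMono : StrictMono stdNormalCDF := by
  intro a c hac
  have hint := integrable_stdNormalDensity
  have hdiff : stdNormalCDF c - stdNormalCDF a
      = ∫ t in a..c, (Real.sqrt (2 * Real.pi))⁻¹ * Real.exp (-t ^ 2 / 2) :=
    intervalIntegral.integral_Iic_sub_Iic hint.integrableOn hint.integrableOn
  have hpos : 0 < ∫ t in a..c, (Real.sqrt (2 * Real.pi))⁻¹ * Real.exp (-t ^ 2 / 2) :=
    intervalIntegral.intervalIntegral_pos_of_pos hint.intervalIntegrable
      (fun _ => by positivity) hac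
  linarith

lemma mixtureStdError_lt_of_sum_lt {d : ℕ} {γ η σ : ℝ} (hγη : 0 < γ * η) (hσ : 0 < σ)
    {w w' : Fin d → ℝ} (b : ℝ) (h : ∑ i, w i < ∑ i, w' i) :
    mixtureStdError d γ η σ w' b < mixtureStdError d γ η σ w b := by
  have hmul : γ * η * ∑ i, w i < γ * η * ∑ i, w' i := mul_lt_mul_of_pos_left h hγη
  unfold mixtureStdError
  gcongr ?_ + ?_
  · exact stdNormalCDF_strictMono (div_lt_div_of_pos_right (by linarith) hσ)
  · exact stdNormalCDF_strictMono (by linarith)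

section UnitSphere

variable {ι : Type*} [Fintype ι]

lemma sum_le_sqrt_card_of_sum_sq_eq_one {w : ι → ℝ} (hw : ∑ i, w i ^ 2 = 1) :
    ∑ i, w i ≤ √(Fintype.card ι) := by
  have hcs : (∑ i, w i) ^ 2 ≤ Fintype.card ι := by
    simpa [hw] using sq_sum_le_card_mul_sum_sq (s := Finset.univ) (f := w)
  exact Real.le_sqrt_of_sq_le hcs

lemma sum_sq_const_inv_sqrt_card [Nonempty ι] :
    ∑ _i : ι, (1 / √(Fintype.card ι)) ^ 2 = 1 := by
  have hcard : (0 : ℝ) < Fintype.card ι := by exact_mod_cast Fintype.card_pos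
  rw [Finset.sum_const, Finset.card_univ, nsmul_eq_mul, div_pow, Real.sq_sqrt hcard.le]
  field_simp

lemma sum_const_inv_sqrt_card [Nonempty ι] :
    ∑ _i : ι, 1 / √(Fintype.card ι) = √(Fintype.card ι) := by
  have hcard : (0 : ℝ) < Fintype.card ι := by exact_mod_cast Fintype.card_pos
  rw [Finset.sum_const, Finset.card_univ, nsmul_eq_mul]
  field_simp
  exact (Real.sq_sqrt hcard.le).symm

lemma eq_inv_sqrt_card_of_sum_sq_eq_one_of_sum_eq {w : ι → ℝ} (hw : ∑ i, w i ^ 2 = 1)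
    (hs : ∑ i, w i = √(Fintype.card ι)) (i : ι) : w i = 1 / √(Fintype.card ι) := by
  have : Nonempty ι := ⟨i⟩
  set c := 1 / √(Fintype.card ι)
  have hc : c * √(Fintype.card ι) = 1 :=
    one_div_mul_cancel (Real.sqrt_pos.mpr (by exact_mod_cast Fintype.card_pos)).ne'
  have hzero : ∑ j, (w j - c) ^ 2 = 0 := by
    calc ∑ j, (w j - c) ^ 2 = ∑ j, w j ^ 2 - 2 * (c * ∑ j, w j) + ∑ _j : ι, c ^ 2 := by
          simp only [sub_sq, Finset.sum_add_distrib, Finset.sum_sub_distrib, Finset.mul_sum]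
          congr 2
          exact Finset.sum_congr rfl fun j _ => by ring
      _ = 0 := by rw [hw, hs, hc, sum_sq_const_inv_sqrt_card]; norm_num
  have := (Finset.sum_eq_zero_iff_of_nonneg fun j _ => sq_nonneg (w j - c)).mp hzero i
    (Finset.mem_univ i)
  exact sub_eq_zero.mp (pow_eq_zero_iff two_ne_zero |>.mp this)

end UnitSphere

theorem stmt8_general (d : ℕ) (γ η σ : ℝ) (hσ : 1 < σ) (hη : 0 < η) (hγ : 0 < γ)
    (w : Fin d → ℝ) (b : ℝ) (hw : ∑ i, (w i) ^ 2 = 1)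
    (hopt : ∀ (w' : Fin d → ℝ) (b' : ℝ), ∑ i, (w' i) ^ 2 = 1 →
      mixtureStdError d γ η σ w b ≤ mixtureStdError d γ η σ w' b') :
    ∀ i, w i = 1 / Real.sqrt d := by
  intro i
  have : Nonempty (Fin d) := ⟨i⟩
  have hsum : ∑ i, w i = √d := by
    refine le_antisymm (by simpa using sum_le_sqrt_card_of_sum_sq_eq_one hw) (not_lt.mp ?_)
    intro hlt
    have hu := hopt (fun _ => 1 / √d) b (by simpa using sum_sq_const_inv_sqrt_card (ι := Fin d))
    refine (mixtureStdError_lt_of_sum_lt (mul_pos hγ hη) (by linarith) b ?_).not_ge hu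
    have hu_sum : ∑ _i : Fin d, 1 / √d = √d := by simpa using sum_const_inv_sqrt_card (ι := Fin d)
    rwa [hu_sum]
  simpa using eq_inv_sqrt_card_of_sum_sq_eq_one_of_sum_eq hw (by simpa using hsum) i

theorem stmt8 (d : ℕ) (γ η σ : ℝ) (hd : 1 ≤ d) (hσ : 1 < σ) (hη : 0 < η) (hγ : 0 < γ)
    (w : Fin d → ℝ) (b : ℝ) (hw : ∑ i, (w i) ^ 2 = 1)
    (hopt : ∀ (w' : Fin d → ℝ) (b' : ℝ), ∑ i, (w' i) ^ 2 = 1 →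
      mixtureStdError d γ η σ w b ≤ mixtureStdError d γ η σ w' b') :
    ∀ i, w i = 1 / Real.sqrt d :=
  stmt8_general d γ η σ hσ hη hγ w b hw hopt
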